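/- Let Φ : C → D be a K-linear functor between Krull-Schmidt categories such that (i) Φ sends indecomposable objects to indecomposable objects and the induced map End_C(X) → End_D(Φ(X)) is a local ring homomorphism for every indecomposable X, and (ii) for indecomposable X, Y, X ≅ Y if and only if Φ(X) ≅ Φ(Y). Then a morphism f : M → N in C is a split surjection if and only if Φ(f) is a split surjection. -/

import Mathlib

open CategoryTheory CategoryTheory.Limits

/-- A (preadditive) category is Krull–Schmidt if every object is a finite direct sum of
objects having local endomorphism rings. -/
def IsKrullSchmidt (C : Type*) [Category C] [Preadditive C] [HasFiniteBiproducts C] : Prop :=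
  ∀ X : C, ∃ (n : ℕ) (f : Fin n → C),
    Nonempty (X ≅ ⨁ f) ∧ ∀ j, IsLocalRing (End (f j))

/-!
Reflecting split epimorphisms with target `N` is stable under isomorphisms and binary biproducts
in `N`, so by the Krull–Schmidt property it suffices to treat an indecomposable target `A`.
Decompose the source as `M ≅ ⨁ mᵢ` with local endomorphism rings. A section of `Φ f` writes
`𝟙 (Φ A)` as a sum over `i`, and as `End (Φ A)` is local one summand is invertible, so
`Φ (mᵢ ⟶ A)` is split epi. Since `End (Φ mᵢ)` is local and `Φ A ≠ 0`, it is an isomorphism;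
then `mᵢ ≅ A` by (ii), and (i) makes `mᵢ ⟶ A` itself an isomorphism.
-/

theorem IsLocalRing.of_ringEquiv {R S : Type*} [Semiring R] [Semiring S] [IsLocalRing R]
    (e : R ≃+* S) : IsLocalRing S :=
  have := e.symm.toEquiv.nontrivial
  .of_isUnit_or_isUnit_of_isUnit_add fun a b hab => by
    have hab' : IsUnit (e.symm a + e.symm b) := by simpa using hab.map e.symm
    simpa using (isUnit_or_isUnit_of_isUnit_add hab').imp (·.map e) (·.map e)

namespace CategoryTheory

variable {C D : Type*} [Category C] [Category D]

theorem isSplitEpi_of_isSplitEpi_comp {X Y Z : C} (f : X ⟶ Y) (g : Y ⟶ Z)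
    (h : IsSplitEpi (f ≫ g)) : IsSplitEpi g :=
  .mk' ⟨section_ (f ≫ g) ≫ f, by simp⟩

theorem Functor.isIso_of_isIso_map_of_iso (Φ : C ⥤ D) {X Y : C}
    (hY : ∀ e : End Y, IsIso (Φ.map e) → IsIso e) (α : X ≅ Y) (b : X ⟶ Y) [IsIso (Φ.map b)] :
    IsIso b := by
  have : IsIso (α.inv ≫ b) := hY _ (by rw [Φ.map_comp]; infer_instance)
  simpa using (inferInstance : IsIso (α.hom ≫ α.inv ≫ b))

section Preadditive

variable [Preadditive C]

def Iso.endRingEquiv {X Y : C} (α : X ≅ Y) : End X ≃+* End Y :=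
  { α.conj with
    map_add' := fun f g => by
      simp only [MulEquiv.toFun_eq_coe, Iso.conj_apply]
      exact (congrArg (α.inv ≫ ·) (Preadditive.add_comp _ _ _ f g α.hom)).trans
        (Preadditive.comp_add _ _ _ _ _ _) }

theorem isIso_of_isSplitEpi_of_isLocalRing_end {X Y : C} [IsLocalRing (End X)] (g : X ⟶ Y)
    [IsSplitEpi g] (hY : ¬IsZero Y) : IsIso g := by
  set e : End X := g ≫ section_ g
  have hsum : e + (1 - e) = 1 := add_sub_cancel e 1
  rcases IsLocalRing.isUnit_or_isUnit_of_add_one hsum with h | h <;> rw [isUnit_iff_isIso] at h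
  · have : IsSplitMono g :=
      .mk' ⟨section_ g ≫ inv e, by rw [← Category.assoc]; exact IsIso.hom_inv_id e⟩
    exact isIso_of_mono_of_isSplitEpi g
  · have hg : g = 0 := by
      have : (1 - e) ≫ g = 0 := by
        change (𝟙 X - g ≫ section_ g) ≫ g = 0
        rw [Preadditive.sub_comp, Category.assoc, IsSplitEpi.id, Category.id_comp,
          Category.comp_id, sub_self]
      exact (cancel_epi (1 - e)).1 (this.trans comp_zero.symm)
    exact absurd ((IsZero.iff_id_eq_zero Y).2 (by simpa [hg] using (IsSplitEpi.id g).symm)) hY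

theorem exists_isSplitEpi_of_isSplitEpi_sum {X Y : C} [IsLocalRing (End Y)] {ι : Type*}
    [Fintype ι] {Z : ι → C} (p : ∀ i, X ⟶ Z i) (q : ∀ i, Z i ⟶ Y)
    (h : IsSplitEpi (∑ i, p i ≫ q i)) : ∃ i, IsSplitEpi (q i) := by
  set σ := section_ (∑ i, p i ≫ q i)
  have hunit : IsUnit (∑ i, σ ≫ p i ≫ q i : End Y) := by
    rw [← Preadditive.comp_sum, IsSplitEpi.id]
    exact isUnit_one
  obtain ⟨i, -, hi⟩ := IsLocalRing.exists_of_isUnit_sum hunit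
  rw [isUnit_iff_isIso] at hi
  exact ⟨i, .mk' ⟨inv (σ ≫ p i ≫ q i) ≫ σ ≫ p i, by simp⟩⟩

theorem biprod.isSplitEpi_of_sections {M A B : C} [HasBinaryBiproduct A B] (f : M ⟶ A ⊞ B)
    {s : A ⟶ M} {t : B ⟶ M} (hs : s ≫ f ≫ biprod.fst = 𝟙 A) (ht : t ≫ f ≫ biprod.snd = 𝟙 B)
    (htf : t ≫ f ≫ biprod.fst = 0) : IsSplitEpi f :=
  .mk' ⟨biprod.desc (s - s ≫ f ≫ biprod.snd ≫ t) t, by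
    ext <;> simp [Preadditive.sub_comp, hs, ht, htf]⟩

theorem isZero_biproduct_of_isEmpty {J : Type*} [IsEmpty J] (f : J → C) [HasBiproduct f] :
    IsZero (⨁ f) :=
  (IsZero.iff_id_eq_zero _).2 (biproduct.hom_ext _ _ isEmptyElim)

noncomputable def biproductFinSuccIso {n : ℕ} (g : Fin (n + 1) → C) [HasBiproduct g]
    [HasBiproduct fun i : Fin n => g i.succ]
    [HasBinaryBiproduct (g 0) (⨁ fun i : Fin n => g i.succ)] :
    ⨁ g ≅ g 0 ⊞ ⨁ fun i : Fin n => g i.succ where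
  hom := biprod.lift (biproduct.π g 0) (biproduct.lift fun i => biproduct.π g i.succ)
  inv := biprod.desc (biproduct.ι g 0) (biproduct.desc fun i => biproduct.ι g i.succ)
  hom_inv_id := by
    rw [biprod.lift_desc, biproduct.lift_desc, ← biproduct.total, Fin.sum_univ_succ]
  inv_hom_id := by
    apply biprod.hom_ext' <;> apply biprod.hom_ext <;> (try ext) <;>
      simp [biproduct.ι_π, Fin.succ_ne_zero, (Fin.succ_ne_zero _).symm]

theorem indecomposable_of_isLocalRing_end [HasBinaryBiproducts C] {X : C}
    [IsLocalRing (End X)] : Indecomposable X := by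
  refine ⟨fun hX => one_ne_zero (α := End X) (hX.eq_of_src _ _), fun Y Z α => ?_⟩
  set eY : End X := α.hom ≫ biprod.fst ≫ biprod.inl ≫ α.inv
  set eZ : End X := α.hom ≫ biprod.snd ≫ biprod.inr ≫ α.inv
  have hsum : eY + eZ = 1 := by
    change α.hom ≫ biprod.fst ≫ biprod.inl ≫ α.inv + α.hom ≫ biprod.snd ≫ biprod.inr ≫ α.inv = 𝟙 X
    rw [← Preadditive.comp_add, ← Category.assoc biprod.fst, ← Category.assoc biprod.snd,
      ← Preadditive.add_comp, biprod.total, Category.id_comp, Iso.hom_inv_id]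
  rcases IsLocalRing.isUnit_or_isUnit_of_add_one hsum with h | h <;> rw [isUnit_iff_isIso] at h
  · right
    have : biprod.inr ≫ α.inv = 0 := by
      refine (cancel_mono eY).1 (Eq.trans ?_ zero_comp.symm)
      simp only [eY, Category.assoc, Iso.inv_hom_id_assoc, biprod.inr_fst_assoc, zero_comp]
    simpa [IsZero.iff_id_eq_zero] using congrArg (· ≫ α.hom ≫ biprod.snd) this
  · left
    have : biprod.inl ≫ α.inv = 0 := by
      refine (cancel_mono eZ).1 (Eq.trans ?_ zero_comp.symm)
      simp only [eZ, Category.assoc, Iso.inv_hom_id_assoc, biprod.inl_snd_assoc, zero_comp]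
    simpa [IsZero.iff_id_eq_zero] using congrArg (· ≫ α.hom ≫ biprod.fst) this

theorem _root_.IsKrullSchmidt.isLocalRing_end [HasFiniteBiproducts C] [HasBinaryBiproducts C]
    (hC : IsKrullSchmidt C) {X : C} (hX : Indecomposable X) : IsLocalRing (End X) := by
  obtain ⟨n, g, ⟨α⟩, hg⟩ := hC X
  cases n with
  | zero => exact absurd ((isZero_biproduct_of_isEmpty g).of_iso α) hX.1
  | succ n =>
    have := hg 0
    rcases hX.2 _ _ (α ≪≫ biproductFinSuccIso g) with h | h
    · exact absurd h indecomposable_of_isLocalRing_end.1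
    · exact .of_ringEquiv (α ≪≫ biproductFinSuccIso g ≪≫ (isoBiprodZero h).symm).symm.endRingEquiv

end Preadditive

def Functor.ReflectsSplitEpisTo (Φ : C ⥤ D) (N : C) : Prop :=
  ∀ ⦃M : C⦄ (f : M ⟶ N), IsSplitEpi (Φ.map f) → IsSplitEpi f

namespace Functor.ReflectsSplitEpisTo

variable {Φ : C ⥤ D}

theorem of_iso {N N' : C} (e : N ≅ N') (h : Φ.ReflectsSplitEpisTo N') :
    Φ.ReflectsSplitEpisTo N := fun M f hf => by
  have : IsSplitEpi (f ≫ e.hom) := h _ (by rw [Φ.map_comp]; infer_instance)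
  simpa using (inferInstance : IsSplitEpi ((f ≫ e.hom) ≫ e.inv))

theorem of_isZero [HasZeroMorphisms C] {N : C} (hN : IsZero N) : Φ.ReflectsSplitEpisTo N :=
  fun _ _ _ => .mk' ⟨0, hN.eq_of_tgt _ _⟩

theorem biprod [Preadditive C] {A B : C} [HasBinaryBiproduct A B] (hA : Φ.ReflectsSplitEpisTo A)
    (hB : Φ.ReflectsSplitEpisTo B) : Φ.ReflectsSplitEpisTo (A ⊞ B) := fun M f hf => by
  obtain ⟨⟨s, hs⟩⟩ := hA (f ≫ biprod.fst) (by rw [Φ.map_comp]; infer_instance)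
  set k := 𝟙 M - f ≫ biprod.fst ≫ s
  -- `k ≫ f ≫ snd` factors through `f` via a split epi, so its image under `Φ` is split epi.
  set L : A ⊞ B ⟶ B := biprod.snd - biprod.fst ≫ s ≫ f ≫ biprod.snd
  have hkL : k ≫ f ≫ biprod.snd = f ≫ L := by
    simp [k, L, Preadditive.sub_comp, Preadditive.comp_sub]
  have : IsSplitEpi L := .mk' ⟨biprod.inr, by simp [L]⟩
  obtain ⟨⟨t, ht⟩⟩ := hB (k ≫ f ≫ biprod.snd) (by rw [hkL, Φ.map_comp]; infer_instance)
  refine biprod.isSplitEpi_of_sections f (t := t ≫ k) hs (by simpa using ht) ?_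
  simp [k, Preadditive.sub_comp, hs]

theorem biproduct [Preadditive C] [HasFiniteBiproducts C] [HasBinaryBiproducts C] {n : ℕ}
    (g : Fin n → C) (h : ∀ j, Φ.ReflectsSplitEpisTo (g j)) : Φ.ReflectsSplitEpisTo (⨁ g) := by
  induction n with
  | zero => exact of_isZero (isZero_biproduct_of_isEmpty g)
  | succ n ih => exact (biprod (h 0) (ih _ fun j => h j.succ)).of_iso (biproductFinSuccIso g)

end Functor.ReflectsSplitEpisTo

variable [Preadditive C] [HasFiniteBiproducts C] [HasBinaryBiproducts C]
  [Preadditive D] [HasFiniteBiproducts D] [HasBinaryBiproducts D]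

theorem Functor.reflectsSplitEpisTo_of_indecomposable (hC : IsKrullSchmidt C)
    (hD : IsKrullSchmidt D) (Φ : C ⥤ D) [Φ.Additive]
    (h1 : ∀ X : C, Indecomposable X → Indecomposable (Φ.obj X))
    (h2 : ∀ X : C, Indecomposable X → ∀ e : End X, IsIso (Φ.map e) → IsIso e)
    (h3 : ∀ X Y : C, Indecomposable X → Indecomposable Y →
      (Nonempty (X ≅ Y) ↔ Nonempty (Φ.obj X ≅ Φ.obj Y)))
    {A : C} (hA : Indecomposable A) : Φ.ReflectsSplitEpisTo A := by
  intro M f hf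
  obtain ⟨n, m, ⟨φ⟩, hm⟩ := hC M
  have : IsLocalRing (End (Φ.obj A)) := hD.isLocalRing_end (h1 A hA)
  have hf_sum : f = ∑ i, (φ.hom ≫ biproduct.π m i) ≫ biproduct.ι m i ≫ φ.inv ≫ f :=
    calc f = φ.hom ≫ (∑ i, biproduct.π m i ≫ biproduct.ι m i) ≫ φ.inv ≫ f := by simp
      _ = _ := by rw [Preadditive.sum_comp, Preadditive.comp_sum]; simp only [Category.assoc]
  obtain ⟨i, hi⟩ := exists_isSplitEpi_of_isSplitEpi_sum (fun i => Φ.map (φ.hom ≫ biproduct.π m i))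
    (fun i => Φ.map (biproduct.ι m i ≫ φ.inv ≫ f))
    (by simp_rw [← Φ.map_comp, ← Φ.map_sum, ← hf_sum]; exact hf)
  set b := biproduct.ι m i ≫ φ.inv ≫ f
  have := hm i
  have hmi : Indecomposable (m i) := indecomposable_of_isLocalRing_end
  have : IsLocalRing (End (Φ.obj (m i))) := hD.isLocalRing_end (h1 _ hmi)
  have := isIso_of_isSplitEpi_of_isLocalRing_end (Φ.map b) (h1 A hA).1
  obtain ⟨α⟩ := (h3 _ _ hmi hA).2 ⟨asIso (Φ.map b)⟩
  have := Φ.isIso_of_isIso_map_of_iso (h2 A hA) α b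
  exact isSplitEpi_of_isSplitEpi_comp (biproduct.ι m i ≫ φ.inv) f
    (by rw [Category.assoc]; infer_instance)

end CategoryTheory

theorem functor_reflects_split_epi_general
    {C : Type*} [Category C] [Preadditive C]
    [HasFiniteBiproducts C] [HasBinaryBiproducts C]
    {D : Type*} [Category D] [Preadditive D]
    [HasFiniteBiproducts D] [HasBinaryBiproducts D]
    (hC : IsKrullSchmidt C) (hD : IsKrullSchmidt D)
    (Φ : C ⥤ D) [Φ.Additive]
    (h1 : ∀ X : C, Indecomposable X → Indecomposable (Φ.obj X))
    (h2 : ∀ X : C, Indecomposable X → ∀ e : End X, IsIso (Φ.map e) → IsIso e)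
    (h3 : ∀ X Y : C, Indecomposable X → Indecomposable Y →
      (Nonempty (X ≅ Y) ↔ Nonempty (Φ.obj X ≅ Φ.obj Y)))
    {M N : C} (f : M ⟶ N) :
    IsSplitEpi f ↔ IsSplitEpi (Φ.map f) := by
  refine ⟨fun _ => inferInstance, fun hf => ?_⟩
  obtain ⟨n, g, ⟨α⟩, hg⟩ := hC N
  have hΦg : ∀ j, Φ.ReflectsSplitEpisTo (g j) := fun j =>
    have := hg j
    Φ.reflectsSplitEpisTo_of_indecomposable hC hD h1 h2 h3 indecomposable_of_isLocalRing_end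
  exact (Functor.ReflectsSplitEpisTo.biproduct g hΦg).of_iso α f hf

/-- Let `Φ : C ⥤ D` be a `K`-linear functor between Krull–Schmidt
categories such that (i) `Φ` sends indecomposables to indecomposables and the induced map
`End(X) → End(Φ X)` is a local ring homomorphism for every indecomposable `X` (i.e.
`Φ.map e` invertible implies `e` invertible), and (ii) for indecomposable `X, Y`, `X ≅ Y`
iff `Φ X ≅ Φ Y`.  Then `f : M ⟶ N` is a split surjection iff `Φ.map f` is. -/
theorem functor_reflects_split_epi
    {K : Type*} [Field K]
    {C : Type*} [Category C] [Preadditive C] [Linear K C]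
    [HasFiniteBiproducts C] [HasBinaryBiproducts C]
    {D : Type*} [Category D] [Preadditive D] [Linear K D]
    [HasFiniteBiproducts D] [HasBinaryBiproducts D]
    (hC : IsKrullSchmidt C) (hD : IsKrullSchmidt D)
    (Φ : C ⥤ D) [Φ.Additive] [Φ.Linear K]
    (h1 : ∀ X : C, Indecomposable X → Indecomposable (Φ.obj X))
    (h2 : ∀ X : C, Indecomposable X → ∀ e : End X, IsIso (Φ.map e) → IsIso e)
    (h3 : ∀ X Y : C, Indecomposable X → Indecomposable Y →
      (Nonempty (X ≅ Y) ↔ Nonempty (Φ.obj X ≅ Φ.obj Y)))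
    {M N : C} (f : M ⟶ N) :
    IsSplitEpi f ↔ IsSplitEpi (Φ.map f) :=
  functor_reflects_split_epi_general hC hD Φ h1 h2 h3 f
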